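/- arXiv:1012.0210 — 2 statements merged into one kernel-verified Lean document; each statement's English description precedes it below -/
import Mathlib

section
/- For 0 < α < 2 define r_α : [0,∞) → ℝ by r_α(t) := (1/2)( e^{αt/2} + e^{−αt/2} − (e^{t/2} − e^{−t/2})^α ). Then r_α is strictly decreasing on (0,∞); indeed r_α'(t) < 0 for every t > 0. -/
/-!
Writing `s = t / 2`, one has `r_α(t) = cosh (α s) - (2 sinh s)^α / 2`, so `r_α'(t) < 0` amounts to
`sinh (α s) < cosh s · (2 sinh s)^(α - 1)`. With `ℓ = log (2 sinh s) < s`, the function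
`a ↦ sinh (a s) e^{-a ℓ} = sinh (a s) / (2 sinh s)^a` is strictly increasing for `a ≥ 0`, and at
`a = 2` it equals `cosh s / (2 sinh s)` by the double angle formula; comparing its values at
`α < 2` and at `2` gives the inequality.
-/

open Real

/-- Shao's covariance function `r_α`. -/
noncomputable def shaoCov (α t : ℝ) : ℝ :=
  (1 / 2) * (Real.exp (α * t / 2) + Real.exp (-(α * t) / 2)
    - (Real.exp (t / 2) - Real.exp (-t / 2)) ^ α)

open Set

lemma shaoCov_eq_cosh_sub (α t : ℝ) :
    shaoCov α t = cosh (α * t / 2) - (2 * sinh (t / 2)) ^ α / 2 := by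
  rw [shaoCov, cosh_eq, sinh_eq, neg_div, neg_div]
  ring_nf

lemma hasDerivAt_shaoCov (α : ℝ) {t : ℝ} (ht : 0 < t) :
    HasDerivAt (shaoCov α)
      (α / 2 * (sinh (α * t / 2) - cosh (t / 2) * (2 * sinh (t / 2)) ^ (α - 1))) t := by
  have hsinh : 2 * sinh (t / 2) ≠ 0 := by positivity
  have hcosh := ((hasDerivAt_id t).const_mul α |>.div_const 2).cosh
  have hpow := (((hasDerivAt_id t).div_const 2).sinh.const_mul 2).rpow_const (p := α) (.inl hsinh)
  rw [show shaoCov α = _ from funext (shaoCov_eq_cosh_sub α)]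
  exact (hcosh.sub (hpow.div_const 2)).congr_deriv (by simp only [id]; ring)

lemma strictMonoOn_sinh_mul_mul_exp_neg {s ℓ : ℝ} (hs : 0 < s) (hℓ : ℓ < s) :
    StrictMonoOn (fun a ↦ sinh (a * s) * exp (-(a * ℓ))) (Ici 0) := by
  have hderiv (a : ℝ) : HasDerivAt (fun a ↦ sinh (a * s) * exp (-(a * ℓ)))
      ((s * cosh (a * s) - ℓ * sinh (a * s)) * exp (-(a * ℓ))) a := by
    have hsinh : HasDerivAt (fun a ↦ sinh (a * s)) (cosh (a * s) * s) a :=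
      (hasDerivAt_mul_const s).sinh
    have hexp : HasDerivAt (fun a ↦ exp (-(a * ℓ))) (exp (-(a * ℓ)) * -ℓ) a :=
      (hasDerivAt_mul_const ℓ).neg.exp
    exact (hsinh.mul hexp).congr_deriv (by ring)
  refine strictMonoOn_of_hasDerivWithinAt_pos (convex_Ici 0)
    (fun a _ ↦ (hderiv a).continuousAt.continuousWithinAt)
    (fun a _ ↦ (hderiv a).hasDerivWithinAt) fun a ha ↦ ?_
  rw [interior_Ici] at ha
  have hsinh : 0 ≤ sinh (a * s) := sinh_nonneg_iff.mpr (mul_pos ha hs).le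
  have hlt : sinh (a * s) < cosh (a * s) := sinh_lt_cosh _
  -- `s cosh - ℓ sinh = s (cosh - sinh) + (s - ℓ) sinh`
  have : 0 < s * cosh (a * s) - ℓ * sinh (a * s) := by nlinarith
  positivity

lemma sinh_mul_lt_cosh_mul_two_sinh_rpow {s α : ℝ} (hs : 0 < s) (hα0 : 0 ≤ α) (hα2 : α < 2) :
    sinh (α * s) < cosh s * (2 * sinh s) ^ (α - 1) := by
  have hD : 0 < 2 * sinh s := by positivity
  have hlog : log (2 * sinh s) < s := by
    rw [log_lt_iff_lt_exp hD, sinh_eq]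
    linarith [exp_pos (-s)]
  have hexp (a : ℝ) : exp (-(a * log (2 * sinh s))) = ((2 * sinh s) ^ a)⁻¹ := by
    rw [exp_neg, rpow_def_of_pos hD, mul_comm]
  have hmono := strictMonoOn_sinh_mul_mul_exp_neg hs hlog hα0 (mem_Ici.mpr zero_le_two) hα2
  simp only [hexp, sinh_two_mul, rpow_two] at hmono
  rw [mul_inv_lt_iff₀ (by positivity)] at hmono
  rw [rpow_sub_one hD.ne', mul_div_assoc', lt_div_iff₀ hD]
  calc sinh (α * s) * (2 * sinh s)
      < 2 * sinh s * cosh s * ((2 * sinh s) ^ 2)⁻¹ * (2 * sinh s) ^ α * (2 * sinh s) := by gcongr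
    _ = cosh s * (2 * sinh s) ^ α := by field_simp

/-- For `0 < α < 2`, Shao's covariance function is strictly decreasing on `(0, ∞)`,
and indeed has strictly negative derivative at every `t > 0`. -/
theorem shaoCov_strictAnti {α : ℝ} (hα0 : 0 < α) (hα2 : α < 2) :
    StrictAntiOn (shaoCov α) (Set.Ioi (0 : ℝ)) ∧
      ∀ t : ℝ, 0 < t → deriv (shaoCov α) t < 0 := by
  have hderiv_neg (t : ℝ) (ht : 0 < t) : deriv (shaoCov α) t < 0 := by
    have hlt := sinh_mul_lt_cosh_mul_two_sinh_rpow (half_pos ht) hα0.le hα2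
    rw [← mul_div_assoc] at hlt
    rw [(hasDerivAt_shaoCov α ht).deriv]
    exact mul_neg_of_pos_of_neg (half_pos hα0) (sub_neg.mpr hlt)
  refine ⟨strictAntiOn_of_deriv_neg (convex_Ioi 0)
    (fun t ht ↦ (hasDerivAt_shaoCov α ht).continuousAt.continuousWithinAt) ?_, hderiv_neg⟩
  rw [interior_Ioi]
  exact hderiv_neg
end

section
/- Fix 0 < α < 2 and define r_α(t) := (1/2)( e^{αt/2} + e^{−αt/2} − (e^{t/2} − e^{−t/2})^α ) for t ≥ 0. Then there exist constants C > 0 and t_0 > 0 (depending on α) such that |r_α(t) − (1 − t^α/2)| ≤ C t^2 for all 0 < t ≤ t_0; that is, r_α(t) = 1 − t^α/2 + O(t^2) as t → 0+. -/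
open Real

lemma exp_sub_exp_neg_le {y : ℝ} (h0 : 0 ≤ y) (h1 : y ≤ 1) :
    Real.exp y - Real.exp (-y) ≤ 2 * y + y ^ 3 := by
  have hy : |y| ≤ 1 := by rwa [abs_of_nonneg h0]
  have hyn : |(-y)| ≤ 1 := by rwa [abs_neg]
  have h3 : (0:ℕ) < 3 := by norm_num
  have hb1 := Real.exp_bound hy h3
  have hb2 := Real.exp_bound hyn h3
  have hsum : ∑ m ∈ Finset.range 3, y ^ m / m.factorial = 1 + y + y ^ 2 / 2 := by
    simp [Finset.sum_range_succ, Nat.factorial]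
    try ring
  have hsum2 : ∑ m ∈ Finset.range 3, (-y) ^ m / m.factorial = 1 - y + y ^ 2 / 2 := by
    simp [Finset.sum_range_succ, Nat.factorial]
    try ring
  rw [hsum, abs_of_nonneg h0] at hb1
  rw [hsum2, abs_neg, abs_of_nonneg h0] at hb2
  have e1 : Real.exp y ≤ 1 + y + y ^ 2 / 2 + y ^ 3 * (4 / (6 * 3)) := by
    have := (abs_sub_le_iff.1 hb1).1
    norm_num [Nat.factorial] at this ⊢
    linarith
  have e2 : 1 - y + y ^ 2 / 2 - y ^ 3 * (4 / (6 * 3)) ≤ Real.exp (-y) := by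
    have := (abs_sub_le_iff.1 hb2).2
    norm_num [Nat.factorial] at this ⊢
    linarith
  nlinarith [pow_nonneg h0 3]

/-- For fixed `0 < α < 2` one has `r_α(t) = 1 - t^α/2 + O(t^2)` as `t → 0+`. -/
theorem shaoCov_asymptotic {α : ℝ} (hα0 : 0 < α) (hα2 : α < 2) :
    ∃ C t₀ : ℝ, 0 < C ∧ 0 < t₀ ∧
      ∀ t : ℝ, 0 < t → t ≤ t₀ →
        |shaoCov α t - (1 - t ^ α / 2)| ≤ C * t ^ 2 := by
  refine ⟨3, 1, by norm_num, one_pos, ?_⟩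
  intro t ht ht1
  set x := α * t / 2 with hxdef
  have hxt : x ≤ t := by
    rw [hxdef]; nlinarith
  have hx0 : 0 ≤ x := by positivity
  have hx1 : |x| ≤ 1 := by rw [abs_of_nonneg hx0]; linarith
  -- bound on cosh part
  have hA : |Real.exp x + Real.exp (-x) - 2| ≤ 2 * t ^ 2 := by
    have h1 := Real.abs_exp_sub_one_sub_id_le hx1
    have h2 := Real.abs_exp_sub_one_sub_id_le (x := -x) (by rwa [abs_neg])
    have : Real.exp x + Real.exp (-x) - 2
        = (Real.exp x - 1 - x) + (Real.exp (-x) - 1 - (-x)) := by ring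
    rw [this]
    calc |(Real.exp x - 1 - x) + (Real.exp (-x) - 1 - (-x))|
        ≤ |Real.exp x - 1 - x| + |Real.exp (-x) - 1 - (-x)| := abs_add_le _ _
      _ ≤ x ^ 2 + (-x) ^ 2 := add_le_add h1 h2
      _ ≤ 2 * t ^ 2 := by nlinarith
  -- bounds on s = exp(t/2) - exp(-t/2)
  set s := Real.exp (t / 2) - Real.exp (-t / 2) with hsdef
  have hy0 : 0 ≤ t / 2 := by linarith
  have hy1 : t / 2 ≤ 1 := by linarith
  have hs_sinh : s = 2 * Real.sinh (t / 2) := by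
    rw [Real.sinh_eq, hsdef, neg_div]; ring
  have hslb : t ≤ s := by
    rw [hs_sinh]
    have := Real.self_le_sinh_iff.2 hy0
    linarith
  have hsub : s ≤ t * (1 + t ^ 2) := by
    have := exp_sub_exp_neg_le hy0 hy1
    rw [hsdef, neg_div] at *
    nlinarith [pow_pos ht 3, this]
  have hs0 : 0 < s := lt_of_lt_of_le ht hslb
  have h1t : (1:ℝ) ≤ 1 + t ^ 2 := by nlinarith
  -- rpow bounds
  have hsa_lb : t ^ α ≤ s ^ α := Real.rpow_le_rpow ht.le hslb hα0.le
  have hsa_ub : s ^ α ≤ t ^ α * (1 + t ^ 2) ^ α := by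
    calc s ^ α ≤ (t * (1 + t ^ 2)) ^ α := Real.rpow_le_rpow hs0.le hsub hα0.le
      _ = t ^ α * (1 + t ^ 2) ^ α := Real.mul_rpow ht.le (by linarith)
  have hpow2 : (1 + t ^ 2) ^ α ≤ 1 + 3 * t ^ 2 := by
    calc (1 + t ^ 2) ^ α ≤ (1 + t ^ 2) ^ (2:ℝ) :=
          Real.rpow_le_rpow_of_exponent_le h1t hα2.le
      _ = (1 + t ^ 2) ^ (2:ℕ) := by rw [← Real.rpow_natCast]; norm_num
      _ ≤ 1 + 3 * t ^ 2 := by nlinarith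
  have hta1 : t ^ α ≤ 1 := Real.rpow_le_one ht.le ht1 hα0.le
  have hta0 : 0 ≤ t ^ α := Real.rpow_nonneg ht.le α
  have hdiff : 0 ≤ s ^ α - t ^ α := by linarith
  have hdiff' : s ^ α - t ^ α ≤ 3 * t ^ 2 := by
    have h1 : s ^ α ≤ t ^ α * (1 + 3 * t ^ 2) := by
      calc s ^ α ≤ t ^ α * (1 + t ^ 2) ^ α := hsa_ub
        _ ≤ t ^ α * (1 + 3 * t ^ 2) := by
            exact mul_le_mul_of_nonneg_left hpow2 hta0
    nlinarith
  -- put things together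
  have hrepr : shaoCov α t - (1 - t ^ α / 2)
      = (Real.exp x + Real.exp (-x) - 2) / 2 - (s ^ α - t ^ α) / 2 := by
    rw [shaoCov, hsdef, hxdef]
    have : -(α * t) / 2 = -(α * t / 2) := by ring
    rw [this]
    ring
  rw [hrepr]
  calc |(Real.exp x + Real.exp (-x) - 2) / 2 - (s ^ α - t ^ α) / 2|
      ≤ |(Real.exp x + Real.exp (-x) - 2) / 2| + |(s ^ α - t ^ α) / 2| := abs_sub _ _
    _ ≤ 2 * t ^ 2 / 2 + 3 * t ^ 2 / 2 := by
        rw [abs_div, abs_div, abs_two, abs_of_nonneg hdiff]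
        linarith
    _ ≤ 3 * t ^ 2 := by nlinarith
end
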